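/- The function f₄(r) = arctan(r) / arcosh(1 + 2·r²) is strictly decreasing on (0,∞), with limit 1/2 as r → 0⁺ and limit 0 as r → ∞; in particular 0 < f₄(r) < 1/2 for all r ∈ (0,∞). -/

import Mathlib

/-!
Since `1 + 2 r² = cosh (2 arsinh r)`, the function is `arctan r / (2 arsinh r)` on `(0, ∞)`.
Its derivative is negative exactly when `arsinh r < √(1 + r²) arctan r`; the difference of
the two sides vanishes at `0` and has derivative `r arctan r / √(1 + r²) > 0`. At `0⁺` both
`arctan` and `arsinh` have derivative `1`, while at `∞` the numerator stays bounded and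
`arsinh → ∞`. The bounds `0 < f < 1/2` then follow from strict monotonicity and the two limits.
-/

open Real Set Filter

/-- Inverse hyperbolic cosine. -/
noncomputable def arcosh (t : ℝ) : ℝ := Real.log (t + Real.sqrt (t ^ 2 - 1))

open Topology

section StrictAntiOn

variable {α β : Type*} [LinearOrder α] [TopologicalSpace β] [Preorder β]
  [OrderClosedTopology β] {f : α → β} {a x : α}

lemma StrictAntiOn.lt_of_tendsto_atTop [NoMaxOrder α] {l : β} (hf : StrictAntiOn f (Ioi a))
    (hl : Tendsto f atTop (𝓝 l)) (hx : a < x) : l < f x := by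
  have : Nonempty α := ⟨x⟩
  obtain ⟨y, hxy⟩ := exists_gt x
  have hy : a < y := hx.trans hxy
  refine lt_of_le_of_lt (le_of_tendsto hl ?_) (hf hx hy hxy)
  filter_upwards [eventually_gt_atTop y] with t hyt
  exact (hf hy (hy.trans hyt) hyt).le

lemma StrictAntiOn.lt_of_tendsto_nhdsGT [TopologicalSpace α] [OrderTopology α] [DenselyOrdered α]
    {L : β} (hf : StrictAntiOn f (Ioi a)) (hL : Tendsto f (𝓝[>] a) (𝓝 L)) (hx : a < x) :
    f x < L := by
  have : (𝓝[>] a).NeBot := nhdsGT_neBot_of_exists_gt ⟨x, hx⟩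
  obtain ⟨y, hay, hyx⟩ := exists_between hx
  refine lt_of_lt_of_le (hf hay hx hyx) (ge_of_tendsto hL ?_)
  filter_upwards [Ioo_mem_nhdsGT hay] with t ht
  exact (hf ht.1 hay ht.2).le

end StrictAntiOn

lemma HasDerivAt.tendsto_div_of_eq_zero {f g : ℝ → ℝ} {f' g' a : ℝ} (hf : HasDerivAt f f' a)
    (hg : HasDerivAt g g' a) (hfa : f a = 0) (hga : g a = 0) (hg' : g' ≠ 0) :
    Tendsto (fun x => f x / g x) (𝓝[≠] a) (𝓝 (f' / g')) := by
  have hslope := (hasDerivAt_iff_tendsto_slope.mp hf).div (hasDerivAt_iff_tendsto_slope.mp hg) hg'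
  refine hslope.congr' ?_
  filter_upwards [self_mem_nhdsWithin] with x hx
  have hx : x - a ≠ 0 := sub_ne_zero.mpr hx
  simp only [Pi.div_apply, slope_def_field, hfa, hga, sub_zero]
  field_simp

lemma arcosh_one_add_two_mul_sq {r : ℝ} (hr : 0 ≤ r) :
    _root_.arcosh (1 + 2 * r ^ 2) = 2 * arsinh r := by
  have h : 1 + 2 * r ^ 2 = cosh (2 * arsinh r) := by
    rw [cosh_two_mul, cosh_sq', sinh_arsinh]; ring
  rw [h]
  exact Real.arcosh_cosh (by positivity [arsinh_nonneg_iff.mpr hr])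

lemma hasDerivAt_sqrt_one_add_sq (x : ℝ) :
    HasDerivAt (fun x => √(1 + x ^ 2)) (x / √(1 + x ^ 2)) x := by
  convert ((hasDerivAt_pow 2 x).const_add 1).sqrt (by positivity) using 1
  field_simp
  ring

lemma arsinh_lt_sqrt_one_add_sq_mul_arctan {x : ℝ} (hx : 0 < x) :
    arsinh x < √(1 + x ^ 2) * arctan x := by
  let φ := fun x => √(1 + x ^ 2) * arctan x - arsinh x
  have hφ : ∀ x, HasDerivAt φ (x / √(1 + x ^ 2) * arctan x) x := by
    intro x
    refine (((hasDerivAt_sqrt_one_add_sq x).mul (hasDerivAt_arctan x)).sub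
      (hasDerivAt_arsinh x)).congr_deriv ?_
    field_simp
    rw [sq_sqrt (by positivity)]
    ring
  have hmono : StrictMonoOn φ (Ici 0) := by
    refine strictMonoOn_of_deriv_pos (convex_Ici 0)
      (HasDerivAt.continuousOn fun x _ => hφ x) fun y hy => ?_
    rw [interior_Ici] at hy
    rw [(hφ y).deriv]
    exact mul_pos (div_pos hy (by positivity)) (arctan_pos.mpr hy)
  simpa [φ] using hmono self_mem_Ici hx.le hx

lemma tendsto_arctan_div_arsinh_nhdsNE_zero :
    Tendsto (fun r => arctan r / arsinh r) (𝓝[≠] 0) (𝓝 1) := by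
  simpa using (hasDerivAt_arctan 0).tendsto_div_of_eq_zero (hasDerivAt_arsinh 0) arctan_zero
    arsinh_zero (by simp)

lemma tendsto_arsinh_atTop : Tendsto arsinh atTop atTop :=
  tendsto_atTop_atTop_of_monotone arsinh_strictMono.monotone fun b =>
    ⟨sinh b, (arsinh_sinh b).ge⟩

lemma tendsto_arctan_div_arsinh_atTop : Tendsto (fun r => arctan r / arsinh r) atTop (𝓝 0) :=
  (tendsto_arctan_atTop.mono_right nhdsWithin_le_nhds).div_atTop tendsto_arsinh_atTop

lemma strictAntiOn_arctan_div_arsinh : StrictAntiOn (fun r => arctan r / arsinh r) (Ioi 0) := by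
  refine strictAntiOn_of_deriv_neg (convex_Ioi 0) ?_ fun x hx => ?_
  · exact continuous_arctan.continuousOn.div continuous_arsinh.continuousOn
      fun x hx => (arsinh_pos_iff.mpr hx).ne'
  rw [interior_Ioi, mem_Ioi] at hx
  have hs : 0 < √(1 + x ^ 2) := by positivity
  have hss : √(1 + x ^ 2) ^ 2 = 1 + x ^ 2 := sq_sqrt (by positivity)
  have hd : HasDerivAt (fun r => arctan r / arsinh r)
      ((1 / (1 + x ^ 2) * arsinh x - arctan x * (√(1 + x ^ 2))⁻¹) / arsinh x ^ 2) x :=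
    (hasDerivAt_arctan x).div (hasDerivAt_arsinh x) (arsinh_pos_iff.mpr hx).ne'
  rw [hd.deriv]
  refine div_neg_of_neg_of_pos ?_ (by positivity [arsinh_pos_iff.mpr hx])
  have key := mul_lt_mul_of_pos_right (arsinh_lt_sqrt_one_add_sq_mul_arctan hx) hs
  rw [sub_neg, one_div_mul_eq_div, ← div_eq_mul_inv, div_lt_div_iff₀ (by positivity) hs]
  linear_combination key + arctan x * hss

theorem stmt16 (f : ℝ → ℝ)
    (hf : ∀ r : ℝ, f r = Real.arctan r / _root_.arcosh (1 + 2 * r ^ 2)) :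
    StrictAntiOn f (Set.Ioi 0) ∧
    Filter.Tendsto f (nhdsWithin 0 (Set.Ioi 0)) (nhds (1 / 2)) ∧
    Filter.Tendsto f Filter.atTop (nhds 0) ∧
    ∀ r ∈ Set.Ioi (0 : ℝ), 0 < f r ∧ f r < 1 / 2 := by
  have hf' : ∀ r ∈ Ioi (0 : ℝ), f r = arctan r / arsinh r / 2 := fun r hr => by
    rw [hf, arcosh_one_add_two_mul_sq (le_of_lt hr), div_mul_eq_div_div_swap]
  have hanti : StrictAntiOn f (Ioi 0) := fun a ha b hb hab => by
    rw [hf' a ha, hf' b hb]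
    exact div_lt_div_of_pos_right (strictAntiOn_arctan_div_arsinh ha hb hab) two_pos
  have hzero : Tendsto f (𝓝[>] 0) (𝓝 (1 / 2)) :=
    ((tendsto_arctan_div_arsinh_nhdsNE_zero.mono_left (nhdsGT_le_nhdsNE 0)).div_const 2).congr'
      (eventually_nhdsWithin_of_forall fun r hr => (hf' r hr).symm)
  have htop : Tendsto f atTop (𝓝 0) := by
    simpa using (tendsto_arctan_div_arsinh_atTop.div_const 2).congr'
      (eventually_gt_atTop 0 |>.mono fun r hr => (hf' r hr).symm)
  exact ⟨hanti, hzero, htop, fun r hr =>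
    ⟨hanti.lt_of_tendsto_atTop htop hr, hanti.lt_of_tendsto_nhdsGT hzero hr⟩⟩
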